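/- Let E be a row-finite directed graph. The maps φ : 𝓗 → 𝓛(M_E) and ψ : 𝓛(M_E) → 𝓗, where φ(H) is the order-ideal of M_E generated by { a_v : v ∈ H } and ψ(I) = { v ∈ E⁰ : a_v ∈ I }, are order-preserving (with respect to inclusion) and mutually inverse bijections between the set 𝓗 of hereditary saturated subsets of E⁰ and the set 𝓛(M_E) of order-ideals of M_E. -/

import Mathlib

/-- A row-finite directed graph: vertex set `V`, edge set `Edge`,
source and range maps, with every vertex emitting finitely many edges. -/
structure RFGraph where
  V : Type
  Edge : Type
  s : Edge → V
  r : Edge → V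
  rowFinite : ∀ v : V, {e : Edge | s e = v}.Finite

namespace RFGraph

/-- The free abelian monoid on the vertex set. -/
abbrev F (G : RFGraph) : Type := G.V →₀ ℕ

/-- `v` emits at least one edge. -/
def emits (G : RFGraph) (v : G.V) : Prop := ∃ e : G.Edge, G.s e = v

/-- `𝐫(v) = Σ_{e ∈ s⁻¹(v)} r(e)` in the free abelian monoid. -/
noncomputable def rr (G : RFGraph) (v : G.V) : G.F :=
  ∑ e ∈ (G.rowFinite v).toFinset, Finsupp.single (G.r e) 1

/-- The one-step relation `→₁`: `α →₁ β` iff `α = x + α'` for a vertex `x`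
emitting at least one edge, and `β = 𝐫(x) + α'`. -/
def step (G : RFGraph) (α β : G.F) : Prop :=
  ∃ (x : G.V) (α' : G.F), G.emits x ∧ α = Finsupp.single x 1 + α' ∧ β = G.rr x + α'

/-- The reflexive-transitive closure `→` of `→₁`. -/
def steps (G : RFGraph) : G.F → G.F → Prop := Relation.ReflTransGen G.step

/-- The additive congruence `∼` on `F_E` generated by `→₁`. -/
noncomputable def graphCon (G : RFGraph) : AddCon G.F := addConGen G.step

/-- The graph monoid `M_E = F_E/∼`. -/
abbrev M (G : RFGraph) : Type := G.graphCon.Quotient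

/-- The class `a_v` of a vertex `v` in the graph monoid. -/
noncomputable def av (G : RFGraph) (v : G.V) : G.M := G.graphCon.mk' (Finsupp.single v 1)

end RFGraph

namespace RFGraph

/-- `v ≥ w`: there is a (possibly empty) directed path from `v` to `w`. -/
def reaches (G : RFGraph) : G.V → G.V → Prop :=
  Relation.ReflTransGen (fun a b => ∃ e : G.Edge, G.s e = a ∧ G.r e = b)

/-- A subset of the vertices is hereditary. -/
def Hereditary (G : RFGraph) (H : Set G.V) : Prop :=
  ∀ v w : G.V, v ∈ H → G.reaches v w → w ∈ H

/-- A subset of the vertices is saturated. -/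
def Saturated (G : RFGraph) (H : Set G.V) : Prop :=
  ∀ v : G.V, G.emits v → (∀ e : G.Edge, G.s e = v → G.r e ∈ H) → v ∈ H

/-- An order-ideal of the graph monoid: a submonoid `I` such that
`x + y ∈ I` implies `x ∈ I` and `y ∈ I`. -/
def IsOrderIdeal (G : RFGraph) (I : Set G.M) : Prop :=
  (0 : G.M) ∈ I ∧ (∀ x y : G.M, x ∈ I → y ∈ I → x + y ∈ I) ∧
    (∀ x y : G.M, x + y ∈ I → x ∈ I ∧ y ∈ I)

/-- The order-ideal generated by a subset of the graph monoid. -/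
def genOI (G : RFGraph) (S : Set G.M) : Set G.M :=
  ⋂₀ {I : Set G.M | G.IsOrderIdeal I ∧ S ⊆ I}

end RFGraph

namespace RFGraph

/-- `φ(H)`: the order-ideal of `M_E` generated by `{a_v : v ∈ H}`. -/
def phiMap (G : RFGraph) (H : Set G.V) : Set G.M := G.genOI (G.av '' H)

/-- `ψ(I) = {v ∈ E⁰ : a_v ∈ I}`. -/
def psiMap (G : RFGraph) (I : Set G.M) : Set G.V := {v : G.V | G.av v ∈ I}

end RFGraph

/-!
The rewriting relation `→₁` on `F_E` satisfies the diamond property: two different vertices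
rewritten out of the same word can be rewritten in either order. Hence `→` is confluent and
`α ∼ β` holds iff `α` and `β` have a common descendant. Descendants of a word supported in a
hereditary set `H` stay supported in `H`, ancestors of such a word are supported in `H` when `H`
is saturated, and every rewriting sequence out of `α + β` splits into sequences out of `α` and
out of `β`. So the classes of words supported in `H` form an order-ideal, which is `φ(H)`, and
`a_v` lies in it exactly when `v ∈ H`. Conversely, `a_v = Σ_{s(e) = v} a_{r(e)}` makes `ψ(I)`
hereditary and saturated, and every element of `M_E` is a sum of multiples of the `a_v`, which
gives `φ(ψ(I)) = I`.
-/

open Finsupp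

theorem Finsupp.add_mem_supported_iff {α : Type*} {s : Set α} {f g : α →₀ ℕ} :
    f + g ∈ supported ℕ ℕ s ↔ f ∈ supported ℕ ℕ s ∧ g ∈ supported ℕ ℕ s := by
  simp only [mem_supported', add_apply, Nat.add_eq_zero_iff]
  exact ⟨fun h => ⟨fun x hx => (h x hx).1, fun x hx => (h x hx).2⟩,
    fun h x hx => ⟨h.1 x hx, h.2 x hx⟩⟩

namespace RFGraph

variable {G : RFGraph}

section Rewriting

theorem step_add_right {α β : G.F} (h : G.step α β) (γ : G.F) : G.step (α + γ) (β + γ) := by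
  obtain ⟨x, α', hx, rfl, rfl⟩ := h
  exact ⟨x, α' + γ, hx, add_assoc _ _ _, add_assoc _ _ _⟩

theorem steps_add {α α' β β' : G.F} (hα : G.steps α α') (hβ : G.steps β β') :
    G.steps (α + β) (α' + β') := by
  have right : ∀ {α α'} (γ : G.F), G.steps α α' → G.steps (α + γ) (α' + γ) := fun γ h =>
    Relation.ReflTransGen.lift (· + γ) (fun _ _ h => step_add_right h γ) _ _ h
  refine (right β hα).trans ?_
  rw [add_comm α' β, add_comm α' β']
  exact right α' hβ

theorem step_diamond {α β γ : G.F} (hβ : G.step α β) (hγ : G.step α γ) :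
    β = γ ∨ ∃ δ, G.step β δ ∧ G.step γ δ := by
  obtain ⟨x, a, hx, rfl, rfl⟩ := hβ
  obtain ⟨y, b, hy, hab, rfl⟩ := hγ
  rcases eq_or_ne x y with rfl | hxy
  · exact .inl (by rw [add_left_cancel hab])
  right
  have hya : single y 1 ≤ a := by
    have := congrArg (· y) hab
    simp only [Finsupp.add_apply, single_eq_same, single_eq_of_ne' hxy] at this
    exact single_le_iff.2 (by omega)
  obtain ⟨τ, rfl⟩ := exists_add_of_le hya
  have hb : b = single x 1 + τ :=
    add_left_cancel (a := single y 1) (by rw [← hab]; abel)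
  exact ⟨G.rr x + G.rr y + τ, ⟨y, G.rr x + τ, hy, by abel, by abel⟩,
    ⟨x, G.rr y + τ, hx, by rw [hb]; abel, by abel⟩⟩

def joinCon (G : RFGraph) : AddCon G.F where
  r := Relation.Join G.steps
  iseqv := Relation.equivalence_join_reflTransGen fun _ _ _ hb hc =>
    match step_diamond hb hc with
    | .inl rfl => ⟨_, .refl, .refl⟩
    | .inr ⟨δ, hbδ, hcδ⟩ => ⟨δ, .single hbδ, .single hcδ⟩
  add' := fun ⟨γ, hw, hx⟩ ⟨δ, hy, hz⟩ => ⟨γ + δ, steps_add hw hy, steps_add hx hz⟩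

theorem graphCon_of_steps {α β : G.F} (h : G.steps α β) : G.graphCon α β := by
  induction h with
  | refl => exact G.graphCon.refl _
  | tail _ hstep ih => exact G.graphCon.trans ih (AddConGen.Rel.of _ _ hstep)

theorem graphCon_eq_joinCon : G.graphCon = G.joinCon := by
  refine le_antisymm (AddCon.addConGen_le.2 fun α β h => ⟨β, .single h, .refl⟩) ?_
  rintro α β ⟨γ, hα, hβ⟩
  exact G.graphCon.trans (graphCon_of_steps hα) (G.graphCon.symm (graphCon_of_steps hβ))

theorem mk'_eq_mk'_iff {α β : G.F} :
    G.graphCon.mk' α = G.graphCon.mk' β ↔ Relation.Join G.steps α β := by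
  refine G.graphCon.eq.trans ?_
  rw [graphCon_eq_joinCon]
  rfl

theorem step_of_add {α β γ : G.F} (h : G.step (α + β) γ) :
    (∃ α', G.step α α' ∧ γ = α' + β) ∨ ∃ β', G.step β β' ∧ γ = α + β' := by
  obtain ⟨x, σ, hx, hσ, rfl⟩ := h
  have rewrite_left : ∀ α β : G.F, α + β = single x 1 + σ → single x 1 ≤ α →
      ∃ α', G.step α α' ∧ G.rr x + σ = α' + β := by
    intro α β h hle
    obtain ⟨α₂, rfl⟩ := exists_add_of_le hle
    refine ⟨G.rr x + α₂, ⟨x, α₂, hx, rfl, rfl⟩, ?_⟩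
    rw [add_assoc, ← add_left_cancel ((add_assoc _ _ _).symm.trans h)]
  have hx_le : single x 1 ≤ α ∨ single x 1 ≤ β := by
    have := congrArg (· x) hσ
    simp only [Finsupp.add_apply, single_eq_same] at this
    simp only [single_le_iff]
    omega
  rcases hx_le with hα | hβ
  · exact .inl (rewrite_left α β hσ hα)
  · obtain ⟨β', hβ', h⟩ := rewrite_left β α (by rw [add_comm, hσ]) hβ
    exact .inr ⟨β', hβ', h.trans (add_comm _ _)⟩

theorem steps_of_add {α β δ : G.F} (h : G.steps (α + β) δ) :
    ∃ δ₁ δ₂, G.steps α δ₁ ∧ G.steps β δ₂ ∧ δ = δ₁ + δ₂ := by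
  induction h with
  | refl => exact ⟨α, β, .refl, .refl, rfl⟩
  | tail _ hstep ih =>
    obtain ⟨δ₁, δ₂, h₁, h₂, rfl⟩ := ih
    rcases step_of_add hstep with ⟨δ₁', hstep', rfl⟩ | ⟨δ₂', hstep', rfl⟩
    · exact ⟨δ₁', δ₂, h₁.tail hstep', h₂, rfl⟩
    · exact ⟨δ₁, δ₂', h₁, h₂.tail hstep', rfl⟩

end Rewriting

section Supports

variable {H : Set G.V}

theorem rr_mem_supported_iff {x : G.V} :
    G.rr x ∈ supported ℕ ℕ H ↔ ∀ e, G.s e = x → G.r e ∈ H := by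
  refine ⟨fun h e he => ?_, fun h => ?_⟩
  · have hpos : 1 ≤ G.rr x (G.r e) := by
      rw [rr, finsetSum_apply]
      simpa using Finset.single_le_sum (f := fun f => single (G.r f) 1 (G.r e))
        (fun _ _ => Nat.zero_le _) (show e ∈ (G.rowFinite x).toFinset by simpa using he)
    by_contra hne
    have := (mem_supported' ℕ _).1 h _ hne
    omega
  · exact Submodule.sum_mem _ fun e he =>
      single_mem_supported ℕ 1 (h e (by simpa using he))

theorem Hereditary.range_mem (hH : G.Hereditary H) {e : G.Edge} (he : G.s e ∈ H) : G.r e ∈ H :=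
  hH _ _ he (.single ⟨e, rfl, rfl⟩)

theorem single_mem_supported_iff {v : G.V} : (single v 1 : G.F) ∈ supported ℕ ℕ H ↔ v ∈ H := by
  simp [mem_supported, support_single]

theorem Hereditary.mem_supported_of_step (hH : G.Hereditary H) {α β : G.F} (h : G.step α β)
    (hα : α ∈ supported ℕ ℕ H) : β ∈ supported ℕ ℕ H := by
  obtain ⟨x, α', -, rfl, rfl⟩ := h
  obtain ⟨hx, hα'⟩ := add_mem_supported_iff.1 hα
  have hxH := single_mem_supported_iff.1 hx
  exact add_mem (rr_mem_supported_iff.2 fun e he => hH.range_mem (he ▸ hxH)) hα'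

theorem Hereditary.mem_supported_of_steps (hH : G.Hereditary H) {α β : G.F} (h : G.steps α β)
    (hα : α ∈ supported ℕ ℕ H) : β ∈ supported ℕ ℕ H := by
  induction h with
  | refl => exact hα
  | tail _ hstep ih => exact hH.mem_supported_of_step hstep ih

theorem Saturated.mem_supported_of_step (hS : G.Saturated H) {α β : G.F} (h : G.step α β)
    (hβ : β ∈ supported ℕ ℕ H) : α ∈ supported ℕ ℕ H := by
  obtain ⟨x, α', hx, rfl, rfl⟩ := h
  obtain ⟨hrr, hα'⟩ := add_mem_supported_iff.1 hβ
  exact add_mem (single_mem_supported_iff.2 (hS x hx (rr_mem_supported_iff.1 hrr))) hα'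

theorem Saturated.mem_supported_of_steps (hS : G.Saturated H) {α β : G.F} (h : G.steps α β)
    (hβ : β ∈ supported ℕ ℕ H) : α ∈ supported ℕ ℕ H := by
  induction h using Relation.ReflTransGen.head_induction_on with
  | refl => exact hβ
  | head hstep _ ih => exact hS.mem_supported_of_step hstep ih

end Supports

section OrderIdeals

theorem isOrderIdeal_sInter {𝓘 : Set (Set G.M)} (h : ∀ I ∈ 𝓘, G.IsOrderIdeal I) :
    G.IsOrderIdeal (⋂₀ 𝓘) :=
  ⟨fun I hI => (h I hI).1,
    fun x y hx hy I hI => (h I hI).2.1 x y (hx I hI) (hy I hI),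
    fun x y hxy => ⟨fun I hI => ((h I hI).2.2 x y (hxy I hI)).1,
      fun I hI => ((h I hI).2.2 x y (hxy I hI)).2⟩⟩

theorem genOI_isOrderIdeal (S : Set G.M) : G.IsOrderIdeal (G.genOI S) :=
  isOrderIdeal_sInter fun _ hI => hI.1

theorem subset_genOI (S : Set G.M) : S ⊆ G.genOI S :=
  fun _ hx _ hI => hI.2 hx

theorem genOI_subset {S I : Set G.M} (hI : G.IsOrderIdeal I) (hS : S ⊆ I) : G.genOI S ⊆ I :=
  fun _ hx => hx I ⟨hI, hS⟩

namespace IsOrderIdeal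

variable {I : Set G.M}

theorem sum_mem_iff (hI : G.IsOrderIdeal I) {ι : Type*} (s : Finset ι) (f : ι → G.M) :
    ∑ i ∈ s, f i ∈ I ↔ ∀ i ∈ s, f i ∈ I := by
  classical
  induction s using Finset.induction_on with
  | empty => simpa using hI.1
  | insert a s ha ih =>
    rw [Finset.sum_insert ha, Finset.forall_mem_insert, ← ih]
    exact ⟨hI.2.2 _ _, fun h => hI.2.1 _ _ h.1 h.2⟩

theorem nsmul_mem_iff (hI : G.IsOrderIdeal I) {n : ℕ} (hn : n ≠ 0) (x : G.M) :
    n • x ∈ I ↔ x ∈ I := by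
  rw [← Finset.card_range n, ← Finset.sum_const, hI.sum_mem_iff]
  exact ⟨fun h => h 0 (Finset.mem_range.2 (Nat.pos_of_ne_zero hn)), fun h _ _ => h⟩

end IsOrderIdeal

theorem mk'_eq_sum (α : G.F) : G.graphCon.mk' α = α.sum fun v n => n • G.av v := by
  conv_lhs => rw [← α.sum_single]
  rw [map_finsuppSum]
  refine sum_congr fun v _ => ?_
  rw [av, ← map_nsmul, smul_single, smul_eq_mul, mul_one]

theorem IsOrderIdeal.mk'_mem_iff {I : Set G.M} (hI : G.IsOrderIdeal I) (α : G.F) :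
    G.graphCon.mk' α ∈ I ↔ ∀ v ∈ α.support, G.av v ∈ I := by
  rw [mk'_eq_sum, Finsupp.sum, hI.sum_mem_iff]
  exact forall₂_congr fun v hv => hI.nsmul_mem_iff (mem_support_iff.1 hv) _

theorem av_eq_sum {v : G.V} (hv : G.emits v) :
    G.av v = ∑ e ∈ (G.rowFinite v).toFinset, G.av (G.r e) := by
  have hstep : G.step (single v 1) (G.rr v) := ⟨v, 0, hv, (add_zero _).symm, (add_zero _).symm⟩
  rw [av, mk'_eq_mk'_iff.2 ⟨_, .single hstep, .refl⟩, rr, map_sum]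
  rfl

theorem IsOrderIdeal.av_mem_iff {I : Set G.M} (hI : G.IsOrderIdeal I) {v : G.V}
    (hv : G.emits v) : G.av v ∈ I ↔ ∀ e, G.s e = v → G.av (G.r e) ∈ I := by
  simp only [av_eq_sum hv, hI.sum_mem_iff, Set.Finite.mem_toFinset, Set.mem_ofPred_eq]

end OrderIdeals

section Correspondence

def supportedClasses (G : RFGraph) (H : Set G.V) : Set G.M :=
  G.graphCon.mk' '' supported ℕ ℕ H

variable {H : Set G.V}

theorem mk'_mem_supportedClasses_iff (hH : G.Hereditary H) (hS : G.Saturated H) {α : G.F} :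
    G.graphCon.mk' α ∈ G.supportedClasses H ↔ α ∈ supported ℕ ℕ H := by
  refine ⟨fun ⟨γ, hγ, hγα⟩ => ?_, fun hα => ⟨α, hα, rfl⟩⟩
  obtain ⟨δ, hγδ, hαδ⟩ := mk'_eq_mk'_iff.1 hγα
  exact hS.mem_supported_of_steps hαδ (hH.mem_supported_of_steps hγδ hγ)

theorem supportedClasses_isOrderIdeal (hH : G.Hereditary H) :
    G.IsOrderIdeal (G.supportedClasses H) := by
  refine ⟨⟨0, zero_mem _, map_zero _⟩,
    fun _ _ ⟨α, hα, hx⟩ ⟨β, hβ, hy⟩ => ⟨α + β, add_mem hα hβ, by rw [map_add, hx, hy]⟩, ?_⟩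
  intro x y ⟨γ, hγ, hxy⟩
  obtain ⟨α, rfl⟩ := AddCon.mk'_surjective x
  obtain ⟨β, rfl⟩ := AddCon.mk'_surjective y
  rw [← map_add] at hxy
  obtain ⟨δ, hγδ, hαβδ⟩ := mk'_eq_mk'_iff.1 hxy
  obtain ⟨δ₁, δ₂, h₁, h₂, rfl⟩ := steps_of_add hαβδ
  obtain ⟨hδ₁, hδ₂⟩ := add_mem_supported_iff.1 (hH.mem_supported_of_steps hγδ hγ)
  exact ⟨⟨δ₁, hδ₁, (mk'_eq_mk'_iff.2 ⟨δ₁, .refl, h₁⟩)⟩, ⟨δ₂, hδ₂, mk'_eq_mk'_iff.2 ⟨δ₂, .refl, h₂⟩⟩⟩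

theorem phiMap_eq_supportedClasses (hH : G.Hereditary H) :
    G.phiMap H = G.supportedClasses H := by
  refine (genOI_subset (supportedClasses_isOrderIdeal hH) ?_).antisymm ?_
  · rintro _ ⟨v, hv, rfl⟩
    exact ⟨single v 1, single_mem_supported_iff.2 hv, rfl⟩
  · rintro _ ⟨α, hα, rfl⟩
    exact (genOI_isOrderIdeal _).mk'_mem_iff α |>.2 fun v hv =>
      subset_genOI _ ⟨v, (mem_supported ℕ α).1 hα hv, rfl⟩

theorem psiMap_phiMap (hH : G.Hereditary H) (hS : G.Saturated H) :
    G.psiMap (G.phiMap H) = H := by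
  ext v
  rw [phiMap_eq_supportedClasses hH, psiMap, Set.mem_ofPred_eq, av,
    mk'_mem_supportedClasses_iff hH hS, single_mem_supported_iff]

theorem phiMap_psiMap {I : Set G.M} (hI : G.IsOrderIdeal I) : G.phiMap (G.psiMap I) = I := by
  refine (genOI_subset hI (Set.image_preimage_subset _ _)).antisymm fun x hx => ?_
  obtain ⟨α, rfl⟩ := AddCon.mk'_surjective x
  exact (genOI_isOrderIdeal _).mk'_mem_iff α |>.2 fun v hv =>
    subset_genOI _ ⟨v, (hI.mk'_mem_iff α).1 hx v hv, rfl⟩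

theorem psiMap_hereditary {I : Set G.M} (hI : G.IsOrderIdeal I) : G.Hereditary (G.psiMap I) := by
  intro v w hv hvw
  induction hvw with
  | refl => exact hv
  | tail _ hedge ih =>
    obtain ⟨e, rfl, rfl⟩ := hedge
    exact (hI.av_mem_iff ⟨e, rfl⟩).1 ih e rfl

theorem psiMap_saturated {I : Set G.M} (hI : G.IsOrderIdeal I) : G.Saturated (G.psiMap I) :=
  fun _ hv hall => (hI.av_mem_iff hv).2 hall

end Correspondence

end RFGraph

/-- `φ` and `ψ` are order-preserving mutually inverse bijections
between hereditary saturated subsets of `E⁰` and order-ideals of `M_E`. -/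
theorem stmt9 (G : RFGraph) :
    (∀ H : Set G.V, G.Hereditary H → G.Saturated H → G.IsOrderIdeal (G.phiMap H)) ∧
    (∀ I : Set G.M, G.IsOrderIdeal I →
        G.Hereditary (G.psiMap I) ∧ G.Saturated (G.psiMap I)) ∧
    (∀ H₁ H₂ : Set G.V, G.Hereditary H₁ → G.Saturated H₁ →
        G.Hereditary H₂ → G.Saturated H₂ → H₁ ⊆ H₂ → G.phiMap H₁ ⊆ G.phiMap H₂) ∧
    (∀ I₁ I₂ : Set G.M, G.IsOrderIdeal I₁ → G.IsOrderIdeal I₂ → I₁ ⊆ I₂ →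
        G.psiMap I₁ ⊆ G.psiMap I₂) ∧
    (∀ H : Set G.V, G.Hereditary H → G.Saturated H → G.psiMap (G.phiMap H) = H) ∧
    (∀ I : Set G.M, G.IsOrderIdeal I → G.phiMap (G.psiMap I) = I) :=
  ⟨fun _ _ _ => RFGraph.genOI_isOrderIdeal _,
    fun _ hI => ⟨RFGraph.psiMap_hereditary hI, RFGraph.psiMap_saturated hI⟩,
    fun _ _ _ _ _ _ h => RFGraph.genOI_subset (RFGraph.genOI_isOrderIdeal _)
      ((Set.image_mono h).trans (RFGraph.subset_genOI _)),
    fun _ _ _ _ h _ hv => h hv,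
    fun _ hH hS => RFGraph.psiMap_phiMap hH hS,
    fun _ hI => RFGraph.phiMap_psiMap hI⟩
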